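/- arXiv:2201.02003 — 2 statements merged into one kernel-verified Lean document; each statement's English description precedes it below -/
import Mathlib

section
/- Let S be an 𝔽_q-subspace of 𝔽_{q^n} with dim_{𝔽_q}(S) = k ≥ 2, let μ ∈ 𝔽_{q^n} ∖ 𝔽_q, and let t = dim_{𝔽_q}(𝔽_q(μ)). Suppose dim_{𝔽_q}(S ∩ μS) = k−1 and t ≤ k−1, and write k = tℓ + m with 0 ≤ m < t. Then m > 0, t is a proper divisor of n, and there exist an 𝔽_q(μ)-subspace S̄ of 𝔽_{q^n} with dim_{𝔽_q(μ)}(S̄) = ℓ and an element b ∈ 𝔽_{q^n} ∖ {0} such that b·𝔽_q(μ) ∩ S̄ = {0} and S = S̄ ⊕ b·⟨1, μ, …, μ^{m−1}⟩_{𝔽_q}. -/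
/-!
Let `T_j = {x | μ^i x ∈ S for all i ≤ j}`. Since `dim (S + μS) = k + 1` and
`T_{j+1} = T_j ∩ μ^{-(j+1)} S` with `T_j + μ^{-(j+1)} S ⊆ μ^{-(j+1)} (S + μS)`, each step of this
chain costs at most one dimension, so `dim T_j ≥ k - j`. As `μ^t` is a combination of
`1, μ, …, μ^{t-1}`, the space `S̄ = T_{t-1}` is `μ`-stable, hence an `𝔽_q(μ)`-space, and
`μS̄ ⊆ S ∩ μS`. Its dimension is therefore a multiple of `t` in `[k - t + 1, k - 1]`, which forces
it to be `tℓ` and `m > 0`. Since `dim T_{m-1} ≥ tℓ + 1`, there is `b ∈ T_{m-1} ∖ S̄`; then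
`b⟨1, …, μ^{m-1}⟩ ⊆ S`, the line `b𝔽_q(μ)` meets the `𝔽_q(μ)`-space `S̄` trivially, and counting
dimensions gives `S = S̄ ⊕ b⟨1, …, μ^{m-1}⟩`.
-/

open Submodule

/-- The span `⟨1, μ, …, μ^{m-1}⟩_{F_q}`. -/
noncomputable def pows (Fq : Type*) {Fqn : Type*} [Field Fq] [Field Fqn] [Algebra Fq Fqn]
    (μ : Fqn) (m : ℕ) : Submodule Fq Fqn :=
  Submodule.span Fq (Set.range fun i : Fin m => μ ^ (i : ℕ))

/-- Multiplication of a subspace by a scalar: `b · W`. -/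
noncomputable def bmul (Fq : Type*) {Fqn : Type*} [Field Fq] [Field Fqn] [Algebra Fq Fqn]
    (b : Fqn) (W : Submodule Fq Fqn) : Submodule Fq Fqn :=
  W.map (LinearMap.mulLeft Fq b)

open Module

theorem Submodule.eq_sup_of_disjoint_of_finrank_add_eq {K V : Type*} [DivisionRing K]
    [AddCommGroup V] [Module K V] {S A B : Submodule K V} [FiniteDimensional K S]
    (hA : A ≤ S) (hB : B ≤ S) (hAB : Disjoint A B)
    (hfin : finrank K A + finrank K B = finrank K S) : S = A ⊔ B := by
  have : FiniteDimensional K A := finiteDimensional_of_le hA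
  have : FiniteDimensional K B := finiteDimensional_of_le hB
  have hsup := finrank_sup_add_finrank_inf_eq A B
  rw [hAB.eq_bot, finrank_bot] at hsup
  exact (eq_of_le_of_finrank_le (sup_le hA hB) (by omega)).symm

theorem Submodule.finrank_add_finrank_le_finrank_inf_add {K V : Type*} [DivisionRing K]
    [AddCommGroup V] [Module K V] {A B C : Submodule K V} [FiniteDimensional K A]
    [FiniteDimensional K B] [FiniteDimensional K C] (h : A ⊔ B ≤ C) :
    finrank K A + finrank K B ≤ finrank K ↥(A ⊓ B) + finrank K C := by
  have := finrank_mono h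
  have := finrank_sup_add_finrank_inf_eq A B
  omega

theorem Nat.eq_and_pos_of_mul_lt_of_lt_mul_succ {t c l m : ℕ} (hmt : m < t)
    (hlt : t * c < t * l + m) (hlt' : t * l + m < t * (c + 1)) : c = l ∧ 0 < m := by
  have hcl : c < l + 1 := Nat.lt_of_mul_lt_mul_left (a := t) (by rw [Nat.mul_succ]; omega)
  have hlc : l < c + 1 := Nat.lt_of_mul_lt_mul_left (a := t) (by omega)
  obtain rfl : c = l := by omega
  omega

section

variable {K L : Type*} [Field K] [Field L] [Algebra K L]

section bmul

theorem mem_bmul {b x : L} {W : Submodule K L} : x ∈ bmul K b W ↔ ∃ w ∈ W, b * w = x :=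
  Iff.rfl

theorem mem_bmul_inv {c x : L} (hc : c ≠ 0) {W : Submodule K L} :
    x ∈ bmul K c⁻¹ W ↔ c * x ∈ W := by
  rw [mem_bmul]
  constructor
  · rintro ⟨w, hw, rfl⟩
    rwa [mul_inv_cancel_left₀ hc]
  · exact fun h => ⟨c * x, h, inv_mul_cancel_left₀ hc x⟩

theorem bmul_mono (b : L) {V W : Submodule K L} (h : V ≤ W) : bmul K b V ≤ bmul K b W :=
  map_mono h

theorem bmul_zero (W : Submodule K L) : bmul K 0 W = ⊥ := by
  ext x
  simp only [mem_bmul, zero_mul, mem_bot]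
  exact ⟨fun ⟨_, _, h⟩ => h.symm, fun h => ⟨0, W.zero_mem, h.symm⟩⟩

instance (b : L) (W : Submodule K L) [FiniteDimensional K W] :
    FiniteDimensional K (bmul K b W) :=
  Module.Finite.map _ _

theorem finrank_bmul {b : L} (hb : b ≠ 0) (W : Submodule K L) :
    finrank K (bmul K b W) = finrank K W :=
  (equivMapOfInjective _ (mul_right_injective₀ hb) W).finrank_eq.symm

end bmul

section pows

variable {μ : L}

theorem pows_le_adjoin (m : ℕ) :
    pows K μ m ≤ Subalgebra.toSubmodule (Algebra.adjoin K {μ}) :=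
  span_le.2 <| by
    rintro _ ⟨i, rfl⟩
    exact pow_mem (Algebra.self_mem_adjoin_singleton K μ) _

theorem adjoin_le_pows (hμ : IsIntegral K μ) :
    Subalgebra.toSubmodule (Algebra.adjoin K {μ}) ≤ pows K μ (minpoly K μ).natDegree := by
  intro y hy
  rw [Subalgebra.mem_toSubmodule, Algebra.adjoin_singleton_eq_range_aeval] at hy
  obtain ⟨f, rfl⟩ := hy
  exact hμ.mem_span_pow ⟨f, rfl⟩

theorem finrank_pows {m : ℕ} (hm : m ≤ (minpoly K μ).natDegree) :
    finrank K (pows K μ m) = m := by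
  have hli : LinearIndependent K fun i : Fin m => μ ^ (i : ℕ) :=
    (linearIndependent_pow (K := K) μ).comp (Fin.castLE hm) (Fin.castLE_injective hm)
  rw [pows, finrank_span_eq_card hli, Fintype.card_fin]

theorem mul_mem_of_mem_pows {S : Submodule K L} {m : ℕ} {x y : L}
    (hx : ∀ i < m, μ ^ i * x ∈ S) (hy : y ∈ pows K μ m) : y * x ∈ S := by
  have : pows K μ m ≤ S.comap (LinearMap.mulRight K x) :=
    span_le.2 <| by
      rintro _ ⟨i, rfl⟩
      exact hx i i.2
  exact this hy

theorem bmul_pows_le {S : Submodule K L} {m : ℕ} {b : L} (hb : ∀ i < m, μ ^ i * b ∈ S) :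
    bmul K b (pows K μ m) ≤ S := by
  rintro _ ⟨y, hy, rfl⟩
  rw [LinearMap.mulLeft_apply, mul_comm]
  exact mul_mem_of_mem_pows hb hy

end pows

section stable

theorem mul_mem_of_mem_adjoin {μ : L} {W : Submodule K L} (hW : ∀ x ∈ W, μ * x ∈ W) :
    ∀ α ∈ Algebra.adjoin K {μ}, ∀ x ∈ W, α * x ∈ W := by
  intro α hα
  induction hα using Algebra.adjoin_induction with
  | mem y hy =>
    rw [Set.mem_singleton_iff.1 hy]
    exact hW
  | algebraMap r => exact fun x hx => by rw [← Algebra.smul_def]; exact W.smul_mem r hx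
  | add y z _ _ hy hz => exact fun x hx => by rw [add_mul]; exact W.add_mem (hy x hx) (hz x hx)
  | mul y z _ _ hy hz => exact fun x hx => by rw [mul_assoc]; exact hy _ (hz x hx)

variable {W : Submodule K L}

theorem finrank_dvd_of_mul_mem (F : IntermediateField K L) (hW : ∀ α ∈ F, ∀ x ∈ W, α * x ∈ W) :
    finrank K F ∣ finrank K W := by
  let WF : Submodule F L :=
    { carrier := W
      add_mem' := W.add_mem
      zero_mem' := W.zero_mem
      smul_mem' := fun c x hx => hW c c.2 x hx }
  exact ⟨finrank F WF, finrank_mul_finrank K F WF |>.symm⟩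

theorem disjoint_bmul_of_mul_mem (F : IntermediateField K L) (hW : ∀ α ∈ F, ∀ x ∈ W, α * x ∈ W)
    {b : L} (hb : b ∉ W) : Disjoint (bmul K b (Subalgebra.toSubmodule F.toSubalgebra)) W := by
  rw [disjoint_def]
  rintro _ ⟨α, hα, rfl⟩ hbα
  by_contra hne
  have hα0 : α ≠ 0 := by rintro rfl; simp at hne
  apply hb
  have := hW α⁻¹ (F.inv_mem hα) _ hbα
  rwa [LinearMap.mulLeft_apply, mul_left_comm, inv_mul_cancel₀ hα0, mul_one] at this

variable {μ : L}

theorem finrank_le_finrank_inf_bmul_of_mul_mem {S : Submodule K L} [FiniteDimensional K S]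
    (hμ : μ ≠ 0) (hWS : W ≤ S) (hW : ∀ x ∈ W, μ * x ∈ W) :
    finrank K W ≤ finrank K ↥(S ⊓ bmul K μ S) := by
  rw [← finrank_bmul hμ]
  refine finrank_mono fun _ ⟨x, hx, hμx⟩ => ⟨?_, x, hWS hx, hμx⟩
  rw [← hμx]
  exact hWS (hW x hx)

theorem isIntegral_of_finrank_adjoin_pos (h : 0 < finrank K (Algebra.adjoin K {μ})) :
    IsIntegral K μ :=
  have : FiniteDimensional K (Algebra.adjoin K {μ}) := .of_finrank_pos h
  .of_mem_of_fg _ (Module.Finite.iff_fg.1 this) μ (Algebra.self_mem_adjoin_singleton K μ)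

theorem finrank_adjoin_singleton (hμ : IsIntegral K μ) :
    finrank K (Algebra.adjoin K {μ}) = (minpoly K μ).natDegree := by
  rw [← IntermediateField.adjoin_simple_toSubalgebra_of_isAlgebraic hμ.isAlgebraic]
  exact IntermediateField.adjoin.finrank hμ

theorem finrank_adjoin_dvd_of_mul_mem (hμ : IsIntegral K μ) (hW : ∀ x ∈ W, μ * x ∈ W) :
    finrank K (Algebra.adjoin K {μ}) ∣ finrank K W := by
  have hF := IntermediateField.adjoin_simple_toSubalgebra_of_isAlgebraic hμ.isAlgebraic
  rw [← hF]
  exact finrank_dvd_of_mul_mem _ fun α hα => mul_mem_of_mem_adjoin hW α (hF ▸ hα)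

theorem finrank_adjoin_dvd_finrank (hμ : IsIntegral K μ) :
    finrank K (Algebra.adjoin K {μ}) ∣ finrank K L := by
  simpa using finrank_adjoin_dvd_of_mul_mem hμ (W := ⊤) fun _ _ => mem_top

theorem disjoint_bmul_adjoin_of_mul_mem (hμ : IsIntegral K μ) (hW : ∀ x ∈ W, μ * x ∈ W)
    {b : L} (hb : b ∉ W) :
    Disjoint (bmul K b (Subalgebra.toSubmodule (Algebra.adjoin K {μ}))) W := by
  have hF := IntermediateField.adjoin_simple_toSubalgebra_of_isAlgebraic hμ.isAlgebraic
  rw [← hF]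
  exact disjoint_bmul_of_mul_mem _ (fun α hα => mul_mem_of_mem_adjoin hW α (hF ▸ hα)) hb

end stable

section preimageChain

variable (K) in
def preimageChain (μ : L) (S : Submodule K L) (j : ℕ) : Submodule K L where
  carrier := {x | ∀ i ≤ j, μ ^ i * x ∈ S}
  add_mem' hx hy i hi := by rw [mul_add]; exact S.add_mem (hx i hi) (hy i hi)
  zero_mem' i _ := by rw [mul_zero]; exact S.zero_mem
  smul_mem' c x hx i hi := by rw [mul_smul_comm]; exact S.smul_mem c (hx i hi)

variable {μ : L} {S : Submodule K L}

theorem mem_preimageChain {j : ℕ} {x : L} :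
    x ∈ preimageChain K μ S j ↔ ∀ i ≤ j, μ ^ i * x ∈ S :=
  Iff.rfl

theorem preimageChain_zero : preimageChain K μ S 0 = S := by
  ext x
  simp [mem_preimageChain]

theorem preimageChain_le (j : ℕ) : preimageChain K μ S j ≤ S :=
  fun x hx => by simpa using hx 0 (Nat.zero_le j)

theorem preimageChain_succ (hμ : μ ≠ 0) (j : ℕ) :
    preimageChain K μ S (j + 1) = preimageChain K μ S j ⊓ bmul K (μ ^ (j + 1))⁻¹ S := by
  ext x
  rw [Submodule.mem_inf, mem_bmul_inv (pow_ne_zero _ hμ), mem_preimageChain, mem_preimageChain]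
  constructor
  · exact fun h => ⟨fun i hi => h i (Nat.le_succ_of_le hi), h _ le_rfl⟩
  · rintro ⟨h, h'⟩ i hi
    rcases Nat.le_succ_iff.1 hi with hi | rfl
    exacts [h i hi, h']

theorem preimageChain_sup_le (hμ : μ ≠ 0) (j : ℕ) :
    preimageChain K μ S j ⊔ bmul K (μ ^ (j + 1))⁻¹ S ≤
      bmul K (μ ^ (j + 1))⁻¹ (S ⊔ bmul K μ S) := by
  refine sup_le (fun x hx => ?_) (bmul_mono _ le_sup_left)
  rw [mem_bmul_inv (pow_ne_zero _ hμ)]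
  refine mem_sup_right ⟨μ ^ j * x, hx j le_rfl, ?_⟩
  rw [LinearMap.mulLeft_apply, pow_succ', mul_assoc]

theorem finrank_le_finrank_preimageChain_add [FiniteDimensional K S] (hμ : μ ≠ 0)
    (hS : finrank K S ≤ finrank K ↥(S ⊓ bmul K μ S) + 1) (j : ℕ) :
    finrank K S ≤ finrank K (preimageChain K μ S j) + j := by
  have hsup : finrank K ↥(S ⊔ bmul K μ S) ≤ finrank K S + 1 := by
    have := finrank_sup_add_finrank_inf_eq S (bmul K μ S)
    rw [finrank_bmul hμ] at this
    omega
  induction j with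
  | zero => rw [preimageChain_zero]; omega
  | succ j ih =>
    have hμj : (μ ^ (j + 1))⁻¹ ≠ 0 := inv_ne_zero (pow_ne_zero _ hμ)
    have : FiniteDimensional K (preimageChain K μ S j) :=
      finiteDimensional_of_le (preimageChain_le j)
    have := finrank_add_finrank_le_finrank_inf_add (A := preimageChain K μ S j)
      (preimageChain_sup_le hμ j)
    rw [← preimageChain_succ hμ, finrank_bmul hμj, finrank_bmul hμj] at this
    omega

theorem mul_mem_preimageChain_natDegree_sub_one (hμ : IsIntegral K μ) {x : L}
    (hx : x ∈ preimageChain K μ S ((minpoly K μ).natDegree - 1)) :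
    μ * x ∈ preimageChain K μ S ((minpoly K μ).natDegree - 1) := by
  intro i hi
  rw [← mul_assoc, ← pow_succ]
  by_cases hlt : i + 1 ≤ (minpoly K μ).natDegree - 1
  · exact hx _ hlt
  · have hdeg : i + 1 = (minpoly K μ).natDegree := by
      have := minpoly.natDegree_pos hμ
      omega
    rw [hdeg]
    refine mul_mem_of_mem_pows (fun i hi => hx i ?_)
      (adjoin_le_pows hμ (pow_mem (Algebra.self_mem_adjoin_singleton K μ) _))
    omega

theorem le_preimageChain_of_mul_mem {W : Submodule K L} (hWS : W ≤ S)
    (hW : ∀ x ∈ W, μ * x ∈ W) (j : ℕ) : W ≤ preimageChain K μ S j :=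
  fun x hx i _ =>
    hWS (mul_mem_of_mem_adjoin hW _ (pow_mem (Algebra.self_mem_adjoin_singleton K μ) i) x hx)

theorem exists_mul_mem_le_finrank_le_add [FiniteDimensional K S] (hμ : μ ≠ 0)
    (hμi : IsIntegral K μ) (hS : finrank K S ≤ finrank K ↥(S ⊓ bmul K μ S) + 1) :
    ∃ W ≤ S, (∀ x ∈ W, μ * x ∈ W) ∧
      finrank K S ≤ finrank K W + ((minpoly K μ).natDegree - 1) :=
  ⟨_, preimageChain_le _, fun _ => mul_mem_preimageChain_natDegree_sub_one hμi,
    finrank_le_finrank_preimageChain_add hμ hS _⟩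

theorem exists_pow_mul_mem_notMem [FiniteDimensional K S] (hμ : μ ≠ 0)
    (hS : finrank K S ≤ finrank K ↥(S ⊓ bmul K μ S) + 1) {W : Submodule K L} (hWS : W ≤ S)
    (hW : ∀ x ∈ W, μ * x ∈ W) {j : ℕ} (hj : finrank K W + j < finrank K S) :
    ∃ b ∉ W, ∀ i ≤ j, μ ^ i * b ∈ S := by
  have hle := le_preimageChain_of_mul_mem hWS hW j
  obtain ⟨b, hb, hbW⟩ := SetLike.exists_of_lt <| hle.lt_of_ne fun h => by
    have := finrank_le_finrank_preimageChain_add hμ hS j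
    rw [← h] at this
    omega
  exact ⟨b, hbW, hb⟩

end preimageChain

end

theorem stmt3_general (Fq Fqn : Type*) [Field Fq] [Field Fqn] [Algebra Fq Fqn]
    (n : ℕ) (hn : Module.finrank Fq Fqn = n)
    (S : Submodule Fq Fqn) (k : ℕ) (hk : Module.finrank Fq ↥S = k) (hk2 : 2 ≤ k)
    (μ : Fqn)
    (t : ℕ) (ht : Module.finrank Fq ↥(Algebra.adjoin Fq {μ}) = t)
    (hdim : Module.finrank Fq ↥(S ⊓ bmul Fq μ S) = k - 1) (htk : t ≤ k - 1)
    (l m : ℕ) (hklm : k = t * l + m) (hmt : m < t) :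
    0 < m ∧ (t ∣ n ∧ t ≠ n) ∧
      ∃ (Sbar : Submodule Fq Fqn) (b : Fqn), b ≠ 0 ∧
        (∀ α ∈ Algebra.adjoin Fq {μ}, ∀ s ∈ Sbar, α * s ∈ Sbar) ∧
        Module.finrank Fq ↥Sbar = l * t ∧
        Disjoint (bmul Fq b (Subalgebra.toSubmodule (Algebra.adjoin Fq {μ}))) Sbar ∧
        Disjoint Sbar (bmul Fq b (pows Fq μ m)) ∧
        S = Sbar ⊔ bmul Fq b (pows Fq μ m) := by
  have : FiniteDimensional Fq S := .of_finrank_pos (by omega)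
  have hint : IsIntegral Fq μ := isIntegral_of_finrank_adjoin_pos (by omega)
  have hdeg : (minpoly Fq μ).natDegree = t := (finrank_adjoin_singleton hint).symm.trans ht
  have hμ0 : μ ≠ 0 := by
    rintro rfl
    rw [bmul_zero, inf_bot_eq, finrank_bot] at hdim
    omega
  have hS : finrank Fq S ≤ finrank Fq ↥(S ⊓ bmul Fq μ S) + 1 := by omega
  obtain ⟨Sbar, hSbarS, hμSbar, hlow⟩ := exists_mul_mem_le_finrank_le_add hμ0 hint hS
  obtain ⟨c, hc⟩ := finrank_adjoin_dvd_of_mul_mem hint hμSbar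
  have hup := finrank_le_finrank_inf_bmul_of_mul_mem hμ0 hSbarS hμSbar
  rw [ht] at hc
  rw [hdeg] at hlow
  obtain ⟨rfl, hm⟩ := Nat.eq_and_pos_of_mul_lt_of_lt_mul_succ (c := c) (l := l) hmt (by omega)
    (by rw [Nat.mul_succ]; omega)
  obtain ⟨b, hbS, hb⟩ := exists_pow_mul_mem_notMem hμ0 hS hSbarS hμSbar (j := m - 1) (by omega)
  have hb0 : b ≠ 0 := fun h => hbS (h ▸ Sbar.zero_mem)
  have hdisj := disjoint_bmul_adjoin_of_mul_mem hint hμSbar hbS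
  have hdisj' := hdisj.symm.mono_right (bmul_mono b (pows_le_adjoin m))
  refine ⟨hm, ⟨?_, ?_⟩, Sbar, b, hb0, mul_mem_of_mem_adjoin hμSbar, by rw [hc, mul_comm],
    hdisj, hdisj', ?_⟩
  · exact ht ▸ hn ▸ finrank_adjoin_dvd_finrank hint
  · rintro rfl
    have : FiniteDimensional Fq Fqn := .of_finrank_pos (by omega)
    have := S.finrank_le
    omega
  · refine eq_sup_of_disjoint_of_finrank_add_eq hSbarS
      (bmul_pows_le fun i hi => hb i (by omega)) hdisj' ?_
    rw [hc, finrank_bmul hb0, finrank_pows (by omega)]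
    omega

/-- Let `S` be a `k`-dimensional `F_q`-subspace of `F_{q^n}`, `k ≥ 2`,
`μ ∈ F_{q^n} \ F_q`, `t = dim_{F_q} F_q(μ)`. Suppose `dim_{F_q}(S ∩ μS) = k - 1`,
`t ≤ k - 1`, and `k = tℓ + m` with `0 ≤ m < t`. Then `m > 0`, `t` is a proper divisor
of `n`, and `S = S̄ ⊕ b·⟨1, μ, …, μ^{m-1}⟩_{F_q}` where `S̄` is an `F_q(μ)`-subspace
of dimension `ℓ` over `F_q(μ)` (i.e. of `F_q`-dimension `ℓt`), `b ≠ 0`, and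
`b·F_q(μ) ∩ S̄ = {0}`. -/
theorem stmt3 (Fq Fqn : Type*) [Field Fq] [Field Fqn] [Algebra Fq Fqn] [Fintype Fq]
    (q n : ℕ) (hq : Fintype.card Fq = q) (hn : Module.finrank Fq Fqn = n)
    (S : Submodule Fq Fqn) (k : ℕ) (hk : Module.finrank Fq ↥S = k) (hk2 : 2 ≤ k)
    (μ : Fqn) (hμ : μ ∉ Set.range (algebraMap Fq Fqn))
    (t : ℕ) (ht : Module.finrank Fq ↥(Algebra.adjoin Fq {μ}) = t)
    (hdim : Module.finrank Fq ↥(S ⊓ bmul Fq μ S) = k - 1) (htk : t ≤ k - 1)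
    (l m : ℕ) (hklm : k = t * l + m) (hmt : m < t) :
    0 < m ∧ (t ∣ n ∧ t ≠ n) ∧
      ∃ (Sbar : Submodule Fq Fqn) (b : Fqn), b ≠ 0 ∧
        (∀ α ∈ Algebra.adjoin Fq {μ}, ∀ s ∈ Sbar, α * s ∈ Sbar) ∧
        Module.finrank Fq ↥Sbar = l * t ∧
        Disjoint (bmul Fq b (Subalgebra.toSubmodule (Algebra.adjoin Fq {μ}))) Sbar ∧
        Disjoint Sbar (bmul Fq b (pows Fq μ m)) ∧
        S = Sbar ⊔ bmul Fq b (pows Fq μ m) :=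
  stmt3_general Fq Fqn n hn S k hk hk2 μ t ht hdim htk l m hklm hmt
end

section
/- Let k' ≥ 2, let S be an 𝔽_q-subspace of 𝔽_{q^n} with dim_{𝔽_q}(S) = k', let μ ∈ 𝔽_{q^n} ∖ 𝔽_q, let T = ⟨1, μ⟩_{𝔽_q}, and let U = S × T. Then the number of points of weight two in L_U different from ⟨(1,0)⟩_{𝔽_{q^n}} is q^j, where j = dim_{𝔽_q}(S ∩ μS). -/
open Submodule

/-- The `F_q`-linear set in `PG(1, q^n)` defined by an `F_q`-subspace `U` of `F_{q^n}²`: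
the set of projective points `⟨v⟩_{F_{q^n}}`, `v ∈ U \ {0}`, viewed as
one-dimensional `F_{q^n}`-subspaces of `F_{q^n}²`. -/
def linSet {Fq Fqn : Type*} [Field Fq] [Field Fqn] [Algebra Fq Fqn]
    (U : Submodule Fq (Fqn × Fqn)) : Set (Submodule Fqn (Fqn × Fqn)) :=
  {P | ∃ v : Fqn × Fqn, v ≠ 0 ∧ v ∈ U ∧ P = Submodule.span Fqn {v}}

/-- The weight of a projective point `P` in the linear set defined by `U`:
`w_{L_U}(P) = dim_{F_q}(U ∩ P)`. -/
noncomputable def weight {Fq Fqn : Type*} [Field Fq] [Field Fqn] [Algebra Fq Fqn]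
    (U : Submodule Fq (Fqn × Fqn)) (P : Submodule Fqn (Fqn × Fqn)) : ℕ :=
  Module.finrank Fq ↥(U ⊓ P.restrictScalars Fq)

/-! A point of `L_U` other than `⟨(1,0)⟩` is `⟨(a,1)⟩` for a unique `a`, and for `U = S × T` its
weight is `dim {λ ∈ T : aλ ∈ S}`. Since `dim T = 2`, the weight is two exactly when `aT ⊆ S`,
i.e. when `a` lies in the subspace `S ∩ μ⁻¹S`, which has `q^j` elements because multiplication
by `μ` maps it onto `S ∩ μS`. -/

section LinearAlgebra

variable {K V : Type*} [Field K] [AddCommGroup V] [Module K V]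

lemma finrank_inf_eq_finrank_iff {T W : Submodule K V} [FiniteDimensional K T] :
    Module.finrank K ↥(T ⊓ W) = Module.finrank K T ↔ T ≤ W :=
  ⟨fun h => inf_eq_left.1 (eq_of_le_of_finrank_eq inf_le_left h), fun h => by rw [inf_eq_left.2 h]⟩

lemma ncard_eq_card_pow_finrank [Fintype K] (W : Submodule K V) [FiniteDimensional K W] :
    (W : Set V).ncard = Fintype.card K ^ Module.finrank K W := by
  rw [← Nat.card_coe_set_eq, SetLike.coe_sort_coe, Module.natCard_eq_pow_finrank (K := K),
    Nat.card_eq_fintype_card]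

end LinearAlgebra

section ProjectiveLine

variable {L : Type*} [Field L]

lemma span_mk_one_injective : Function.Injective fun a : L => span L {(a, (1 : L))} := by
  intro a b (h : span L {(a, (1 : L))} = span L {(b, (1 : L))})
  obtain ⟨c, hc⟩ := mem_span_singleton.1 (h ▸ mem_span_singleton_self (a, (1 : L)))
  simp only [Prod.smul_mk, smul_eq_mul, mul_one, Prod.mk.injEq] at hc
  rw [← hc.1, hc.2, one_mul]

lemma span_mk_one_ne_span_one_zero (a : L) :
    span L {(a, (1 : L))} ≠ span L {((1 : L), (0 : L))} := by
  intro h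
  obtain ⟨c, hc⟩ := mem_span_singleton.1 (h ▸ mem_span_singleton_self (a, (1 : L)))
  simp at hc

lemma span_singleton_eq_span_one_zero {s : L} (hs : s ≠ 0) :
    span L {(s, (0 : L))} = span L {((1 : L), (0 : L))} := by
  simpa using span_singleton_smul_eq (IsUnit.mk0 s hs) ((1 : L), (0 : L))

lemma span_singleton_eq_span_mk_one {s t : L} (ht : t ≠ 0) :
    span L {(s, t)} = span L {(s / t, (1 : L))} := by
  have := span_singleton_smul_eq (IsUnit.mk0 t ht) (s / t, (1 : L))
  rwa [Prod.smul_mk, smul_eq_mul, smul_eq_mul, mul_div_cancel₀ _ ht, mul_one] at this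

end ProjectiveLine

section LinearSet

variable {K L : Type*} [Field K] [Field L] [Algebra K L]

lemma pows_two_eq_span_range (μ : L) : pows K μ 2 = span K (Set.range ![1, μ]) := by
  rw [pows]
  congr 2
  funext i
  fin_cases i <;> simp

lemma pows_two_le_iff {μ : L} {V : Submodule K L} : pows K μ 2 ≤ V ↔ 1 ∈ V ∧ μ ∈ V := by
  simp [pows_two_eq_span_range, span_le, Set.insert_subset_iff, and_comm]

lemma finrank_pows_two {μ : L} (hμ : μ ∉ Set.range (algebraMap K L)) :
    Module.finrank K (pows K μ 2) = 2 := by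
  have hli : LinearIndependent K ![(1 : L), μ] :=
    (LinearIndependent.pair_iff' one_ne_zero).2 fun a ha =>
      hμ ⟨a, by rw [Algebra.algebraMap_eq_smul_one, ha]⟩
  rw [pows_two_eq_span_range, finrank_span_eq_card hli, Fintype.card_fin]

lemma prod_inf_span_mk_one (S T : Submodule K L) (a : L) :
    S.prod T ⊓ (span L {(a, (1 : L))}).restrictScalars K
      = (T ⊓ S.comap (LinearMap.mulLeft K a)).map ((LinearMap.mulLeft K a).prod LinearMap.id) := by
  ext ⟨x, y⟩
  simp only [mem_inf, mem_prod, restrictScalars_mem, mem_span_singleton, mem_map, mem_comap,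
    LinearMap.prod_apply, Function.prod_apply, LinearMap.mulLeft_apply, LinearMap.id_coe, id_eq,
    Prod.mk.injEq, Prod.smul_mk, smul_eq_mul, mul_one]
  constructor
  · rintro ⟨⟨hxS, hyT⟩, c, rfl, rfl⟩
    exact ⟨c, ⟨hyT, by rwa [mul_comm]⟩, mul_comm _ _, rfl⟩
  · rintro ⟨c, ⟨hcT, hcS⟩, rfl, rfl⟩
    exact ⟨⟨hcS, hcT⟩, c, mul_comm _ _, rfl⟩

lemma weight_prod_span_mk_one (S T : Submodule K L) (a : L) :
    weight (S.prod T) (span L {(a, (1 : L))})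
      = Module.finrank K ↥(T ⊓ S.comap (LinearMap.mulLeft K a)) := by
  have hinj : Function.Injective ((LinearMap.mulLeft K a).prod (LinearMap.id (R := K) (M := L))) :=
    fun x y h => congrArg Prod.snd h
  rw [weight, prod_inf_span_mk_one]
  exact (equivMapOfInjective _ hinj _).finrank_eq.symm

lemma weight_prod_pows_two_eq_two_iff {μ : L} (hμ : μ ∉ Set.range (algebraMap K L))
    (S : Submodule K L) (a : L) :
    weight (S.prod (pows K μ 2)) (span L {(a, (1 : L))}) = 2 ↔
      a ∈ S ⊓ S.comap (LinearMap.mulLeft K μ) := by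
  have : FiniteDimensional K (pows K μ 2) := FiniteDimensional.span_of_finite K (Set.finite_range _)
  rw [weight_prod_span_mk_one, ← Eq.congr_right (finrank_pows_two hμ), finrank_inf_eq_finrank_iff,
    pows_two_le_iff]
  simp [mul_comm]

lemma setOf_weight_prod_pows_two_eq_two {μ : L} (hμ : μ ∉ Set.range (algebraMap K L))
    (S : Submodule K L) :
    {P | P ∈ linSet (S.prod (pows K μ 2)) ∧ weight (S.prod (pows K μ 2)) P = 2 ∧
        P ≠ span L {((1 : L), (0 : L))}}
      = (fun a : L => span L {(a, (1 : L))}) ''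
        ((S ⊓ S.comap (LinearMap.mulLeft K μ) : Submodule K L) : Set L) := by
  ext P
  constructor
  · rintro ⟨⟨⟨s, t⟩, hv, -, rfl⟩, hw, hne⟩
    have ht : t ≠ 0 := by
      rintro rfl
      exact hne (span_singleton_eq_span_one_zero fun hs => hv (by rw [hs]; rfl))
    rw [span_singleton_eq_span_mk_one ht] at hw ⊢
    exact ⟨s / t, (weight_prod_pows_two_eq_two_iff hμ S _).1 hw, rfl⟩
  · rintro ⟨a, ha, rfl⟩
    have h1 : (1 : L) ∈ pows K μ 2 := (pows_two_le_iff.1 le_rfl).1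
    exact ⟨⟨(a, 1), by simp, ⟨ha.1, h1⟩, rfl⟩, (weight_prod_pows_two_eq_two_iff hμ S a).2 ha,
      span_mk_one_ne_span_one_zero a⟩

lemma map_mulLeft_inf_comap (μ : L) (S : Submodule K L) :
    (S ⊓ S.comap (LinearMap.mulLeft K μ)).map (LinearMap.mulLeft K μ) = S ⊓ bmul K μ S := by
  ext x
  simp only [mem_map, mem_inf, mem_comap, bmul, LinearMap.mulLeft_apply]
  constructor
  · rintro ⟨y, ⟨hyS, hμyS⟩, rfl⟩
    exact ⟨hμyS, y, hyS, rfl⟩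
  · rintro ⟨hxS, y, hyS, rfl⟩
    exact ⟨y, ⟨hyS, hxS⟩, rfl⟩

lemma finrank_inf_comap_mulLeft {μ : L} (hμ : μ ≠ 0) (S : Submodule K L) :
    Module.finrank K ↥(S ⊓ S.comap (LinearMap.mulLeft K μ)) =
      Module.finrank K ↥(S ⊓ bmul K μ S) := by
  rw [← map_mulLeft_inf_comap]
  exact (equivMapOfInjective _ (mul_right_injective₀ hμ) _).finrank_eq

end LinearSet

theorem stmt5_general (Fq Fqn : Type*) [Field Fq] [Field Fqn] [Algebra Fq Fqn] [Fintype Fq]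
    (q : ℕ) (hq : Fintype.card Fq = q)
    (k' : ℕ) (hk' : 2 ≤ k')
    (S : Submodule Fq Fqn) (hS : Module.finrank Fq ↥S = k')
    (μ : Fqn) (hμ : μ ∉ Set.range (algebraMap Fq Fqn))
    (T : Submodule Fq Fqn) (hT : T = pows Fq μ 2)
    (U : Submodule Fq (Fqn × Fqn)) (hU : U = S.prod T) :
    Set.ncard
        {P | P ∈ linSet U ∧ weight U P = 2 ∧ P ≠ Submodule.span Fqn {((1 : Fqn), (0 : Fqn))}}
      = q ^ Module.finrank Fq ↥(S ⊓ bmul Fq μ S) := by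
  subst hq hT hU
  have hμ0 : μ ≠ 0 := fun h => hμ ⟨0, by rw [h, map_zero]⟩
  have : FiniteDimensional Fq S := FiniteDimensional.of_finrank_pos (by omega)
  rw [setOf_weight_prod_pows_two_eq_two hμ S, Set.ncard_image_of_injective _ span_mk_one_injective,
    ncard_eq_card_pow_finrank, finrank_inf_comap_mulLeft hμ0]

/-- Let `k' ≥ 2`, `S` an `F_q`-subspace of `F_{q^n}` of dimension `k'`,
`μ ∈ F_{q^n} \ F_q`, `T = ⟨1, μ⟩_{F_q}`, `U = S × T`. Then the number of points of
weight two in `L_U` different from `⟨(1,0)⟩` is `q^j`, where `j = dim_{F_q}(S ∩ μS)`. -/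
theorem stmt5 (Fq Fqn : Type*) [Field Fq] [Field Fqn] [Algebra Fq Fqn] [Fintype Fq]
    (q n : ℕ) (hq : Fintype.card Fq = q) (hn : Module.finrank Fq Fqn = n)
    (k' : ℕ) (hk' : 2 ≤ k')
    (S : Submodule Fq Fqn) (hS : Module.finrank Fq ↥S = k')
    (μ : Fqn) (hμ : μ ∉ Set.range (algebraMap Fq Fqn))
    (T : Submodule Fq Fqn) (hT : T = pows Fq μ 2)
    (U : Submodule Fq (Fqn × Fqn)) (hU : U = S.prod T) :
    Set.ncard
        {P | P ∈ linSet U ∧ weight U P = 2 ∧ P ≠ Submodule.span Fqn {((1 : Fqn), (0 : Fqn))}}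
      = q ^ Module.finrank Fq ↥(S ⊓ bmul Fq μ S) :=
  stmt5_general Fq Fqn q hq k' hk' S hS μ hμ T hT U hU
end
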